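/- Let G be a connected graph with n ≥ 2 vertices and m edges. Then the Kirchhoff indices of the triangulation and subdivision of G are related by R(T(G)) = (1/3)·R(S(G)) + m(m + n − 1)/3. -/

import Mathlib

open BigOperators Matrix

namespace KirchhoffPaper

/-- `B` is a Moore–Penrose (pseudo)inverse of `A`. -/
def IsMoorePenrose {n : Type*} [Fintype n] [DecidableEq n] (A B : Matrix n n ℝ) : Prop :=
  A * B * A = A ∧ B * A * B = B ∧ (A * B)ᵀ = A * B ∧ (B * A)ᵀ = B * A

variable {V : Type*}

/-- The resistance distance between `i` and `j` in `G`: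
`Ω_{ij} = L⁺_{ii} + L⁺_{jj} - 2 L⁺_{ij}` with `L⁺` the Moore–Penrose inverse of the Laplacian. -/
noncomputable def resistanceDistance [Fintype V] [DecidableEq V]
    (G : SimpleGraph V) [DecidableRel G.Adj] (i j : V) : ℝ :=
  letI := Classical.propDecidable
  if h : ∃ B, IsMoorePenrose (G.lapMatrix ℝ) B then
    h.choose i i + h.choose j j - 2 * h.choose i j
  else 0

/-- Kirchhoff index `R(G) = Σ_{{i,j}⊆V} Ω_{ij}` (as half the sum over ordered pairs;
note `Ω_{ii} = 0`). -/
noncomputable def kirchhoffIndex [Fintype V] [DecidableEq V]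
    (G : SimpleGraph V) [DecidableRel G.Adj] : ℝ :=
  (1 / 2) * ∑ i, ∑ j, resistanceDistance G i j

/-- Additive degree-Kirchhoff index `R⁺(G) = Σ_{{i,j}⊆V} (d_i + d_j) Ω_{ij}`. -/
noncomputable def addDegKirchhoffIndex [Fintype V] [DecidableEq V]
    (G : SimpleGraph V) [DecidableRel G.Adj] : ℝ :=
  (1 / 2) * ∑ i, ∑ j, ((G.degree i : ℝ) + (G.degree j : ℝ)) * resistanceDistance G i j

/-- Multiplicative degree-Kirchhoff index `R*(G) = Σ_{{i,j}⊆V} d_i d_j Ω_{ij}`. -/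
noncomputable def mulDegKirchhoffIndex [Fintype V] [DecidableEq V]
    (G : SimpleGraph V) [DecidableRel G.Adj] : ℝ :=
  (1 / 2) * ∑ i, ∑ j, ((G.degree i : ℝ) * (G.degree j : ℝ)) * resistanceDistance G i j

/-- The subdivision `S(G)`: each edge of `G` is replaced by a path of length two through a
new vertex (one new vertex per edge of `G`). -/
def subdivision [DecidableEq V] (G : SimpleGraph V) : SimpleGraph (V ⊕ G.edgeSet) where
  Adj x y :=
    match x, y with
    | Sum.inl u, Sum.inr e => u ∈ (e : Sym2 V)
    | Sum.inr e, Sum.inl u => u ∈ (e : Sym2 V)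
    | _, _ => False
  symm := ⟨by rintro (u | e) (v | f) h <;> exact h⟩
  loopless := ⟨by rintro (u | e) h <;> exact h⟩

/-- The triangulation `T(G)`: each edge `uv` of `G` is turned into a triangle `uwv`
with `w` a new vertex associated with `uv`. -/
def triangulation [DecidableEq V] (G : SimpleGraph V) : SimpleGraph (V ⊕ G.edgeSet) where
  Adj x y :=
    match x, y with
    | Sum.inl u, Sum.inl v => G.Adj u v
    | Sum.inl u, Sum.inr e => u ∈ (e : Sym2 V)
    | Sum.inr e, Sum.inl u => u ∈ (e : Sym2 V)
    | _, _ => False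
  symm := by
    constructor
    rintro (u | e) (v | f) h
    · exact G.adj_symm h
    · exact h
    · exact h
    · exact h
  loopless := by
    constructor
    rintro (u | e) h
    · exact G.loopless.irrefl u h
    · exact h

instance [Fintype V] [DecidableEq V] (G : SimpleGraph V) [DecidableRel G.Adj] :
    DecidableRel (subdivision G).Adj := fun x y =>
  match x, y with
  | Sum.inl _, Sum.inl _ => inferInstanceAs (Decidable False)
  | Sum.inl u, Sum.inr e => inferInstanceAs (Decidable (u ∈ (e : Sym2 V)))
  | Sum.inr e, Sum.inl u => inferInstanceAs (Decidable (u ∈ (e : Sym2 V)))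
  | Sum.inr _, Sum.inr _ => inferInstanceAs (Decidable False)

instance [Fintype V] [DecidableEq V] (G : SimpleGraph V) [DecidableRel G.Adj] :
    DecidableRel (triangulation G).Adj := fun x y =>
  match x, y with
  | Sum.inl u, Sum.inl v => inferInstanceAs (Decidable (G.Adj u v))
  | Sum.inl u, Sum.inr e => inferInstanceAs (Decidable (u ∈ (e : Sym2 V)))
  | Sum.inr e, Sum.inl u => inferInstanceAs (Decidable (u ∈ (e : Sym2 V)))
  | Sum.inr _, Sum.inr _ => inferInstanceAs (Decidable False)

/-- A bundled finite simple graph (with decidable adjacency), used for iterating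
the subdivision and triangulation constructions. -/
structure FGraph where
  V : Type*
  [fV : Fintype V]
  [dV : DecidableEq V]
  G : SimpleGraph V
  [dG : DecidableRel G.Adj]

attribute [instance] FGraph.fV FGraph.dV FGraph.dG

/-- Subdivision, as an operation on bundled graphs. -/
def FGraph.subdiv (H : FGraph) : FGraph := { V := H.V ⊕ H.G.edgeSet, G := subdivision H.G }

/-- Triangulation, as an operation on bundled graphs. -/
def FGraph.triang (H : FGraph) : FGraph := { V := H.V ⊕ H.G.edgeSet, G := triangulation H.G }

/-- Kirchhoff index of a bundled graph. -/
noncomputable def FGraph.R (H : FGraph) : ℝ := kirchhoffIndex H.G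

/-- Additive degree-Kirchhoff index of a bundled graph. -/
noncomputable def FGraph.Rplus (H : FGraph) : ℝ := addDegKirchhoffIndex H.G

/-- Multiplicative degree-Kirchhoff index of a bundled graph. -/
noncomputable def FGraph.Rstar (H : FGraph) : ℝ := mulDegKirchhoffIndex H.G

/-! For a connected graph on `k` vertices, `(L + J/k)⁻¹ - J/k` (with `J` the all-ones matrix) is
the Moore–Penrose inverse of its Laplacian `L`, so `Ω(x, y) = z x - z y` for any potential `z`
with `L z = eₓ - e_y`.

Over `V ⊕ V'`, with `N` the vertex–edge incidence matrix of `G` (so `N Nᵀ = D + A`), the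
Laplacians are `L_S = [[D, -N], [-Nᵀ, 2]]` and `L_T = [[2D - A, -N], [-Nᵀ, 2]]`; hence
`L_T (1 + Q L_S) = 3 L_S`, where `Q` is the diagonal projection onto `V'`. So if `w` is a
potential in `S(G)`, then `(w + Q L_S w) / 3` is one in `T(G)` for the same currents, which gives
`Ω_T(x, y) = (Ω_S(x, y) + [x ∈ V'] + [y ∈ V']) / 3` for `x ≠ y`. Summing over pairs, each new
vertex lies in `n + m - 1` of them. -/

section MoorePenrose

variable {W : Type*} [Fintype W] [DecidableEq W]

theorem IsMoorePenrose.unique {A B C : Matrix W W ℝ} (hB : IsMoorePenrose A B)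
    (hC : IsMoorePenrose A C) : B = C := by
  obtain ⟨hB1, hB2, hB3, hB4⟩ := hB
  obtain ⟨hC1, hC2, hC3, hC4⟩ := hC
  have hAB : A * B = A * C := by
    calc A * B = (A * C) * (A * B) := by rw [← Matrix.mul_assoc, hC1]
      _ = (A * C)ᵀ * (A * B)ᵀ := by rw [hC3, hB3]
      _ = (A * B * A * C)ᵀ := by simp only [Matrix.transpose_mul, Matrix.mul_assoc]
      _ = A * C := by rw [hB1, hC3]
  have hBA : B * A = C * A := by
    calc B * A = (B * A) * (C * A) := by rw [Matrix.mul_assoc, ← Matrix.mul_assoc A, hC1]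
      _ = (B * A)ᵀ * (C * A)ᵀ := by rw [hB4, hC4]
      _ = (C * (A * B * A))ᵀ := by simp only [Matrix.transpose_mul, Matrix.mul_assoc]
      _ = C * A := by rw [hB1, hC4]
  calc B = B * A * B := hB2.symm
    _ = C * A * C := by rw [hBA, Matrix.mul_assoc, hAB, ← Matrix.mul_assoc]
    _ = C := hC2

variable {𝕜 : Type*} [Field 𝕜] {L P : Matrix W W 𝕜}

theorem isUnit_add_of_idempotent (hPP : P * P = P) (hPL : P * L = 0)
    (hker : ∀ z, L *ᵥ z = 0 → P *ᵥ z = 0 → z = 0) : IsUnit (L + P) := by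
  refine Matrix.mulVec_injective_iff_isUnit.mp fun x y hxy => sub_eq_zero.mp ?_
  have hK : (L + P) *ᵥ (x - y) = 0 := by rw [Matrix.mulVec_sub, hxy, sub_self]
  have hP : P *ᵥ (x - y) = 0 := by
    simpa [Matrix.mulVec_mulVec, Matrix.mul_add, hPL, hPP] using congrArg (P *ᵥ ·) hK
  exact hker _ (by simpa [Matrix.add_mulVec, hP] using hK) hP

theorem mul_inv_add_eq_self (hPP : P * P = P) (hPL : P * L = 0) (hK : IsUnit (L + P)) :
    P * (L + P)⁻¹ = P := by
  calc P * (L + P)⁻¹ = P * (L + P) * (L + P)⁻¹ := by rw [Matrix.mul_add, hPL, hPP, zero_add]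
    _ = P := Matrix.mul_nonsing_inv_cancel_right _ _ ((Matrix.isUnit_iff_isUnit_det _).mp hK)

theorem inv_add_mul_eq_self (hPP : P * P = P) (hLP : L * P = 0) (hK : IsUnit (L + P)) :
    (L + P)⁻¹ * P = P := by
  calc (L + P)⁻¹ * P = (L + P)⁻¹ * ((L + P) * P) := by rw [Matrix.add_mul, hLP, hPP, zero_add]
    _ = P := Matrix.nonsing_inv_mul_cancel_left _ _ ((Matrix.isUnit_iff_isUnit_det _).mp hK)

theorem mul_inv_add_sub (hPP : P * P = P) (hLP : L * P = 0) (hPL : P * L = 0)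
    (hK : IsUnit (L + P)) : L * ((L + P)⁻¹ - P) = 1 - P := by
  calc L * ((L + P)⁻¹ - P) = (L + P - P) * (L + P)⁻¹ := by
        rw [Matrix.mul_sub, hLP, sub_zero, add_sub_cancel_right]
    _ = 1 - P := by
        rw [Matrix.sub_mul, Matrix.mul_nonsing_inv _ ((Matrix.isUnit_iff_isUnit_det _).mp hK),
          mul_inv_add_eq_self hPP hPL hK]

theorem inv_add_sub_mul (hPP : P * P = P) (hLP : L * P = 0) (hPL : P * L = 0)
    (hK : IsUnit (L + P)) : ((L + P)⁻¹ - P) * L = 1 - P := by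
  calc ((L + P)⁻¹ - P) * L = (L + P)⁻¹ * (L + P - P) := by
        rw [Matrix.sub_mul, hPL, sub_zero, add_sub_cancel_right]
    _ = 1 - P := by
        rw [Matrix.mul_sub, Matrix.nonsing_inv_mul _ ((Matrix.isUnit_iff_isUnit_det _).mp hK),
          inv_add_mul_eq_self hPP hLP hK]

theorem isMoorePenrose_inv_add_sub {L P : Matrix W W ℝ} (hPP : P * P = P) (hP : Pᵀ = P)
    (hLP : L * P = 0) (hPL : P * L = 0) (hK : IsUnit (L + P)) :
    IsMoorePenrose L ((L + P)⁻¹ - P) := by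
  have hLB := mul_inv_add_sub hPP hLP hPL hK
  have hBL := inv_add_sub_mul hPP hLP hPL hK
  refine ⟨?_, ?_, ?_, ?_⟩
  · rw [hLB, Matrix.sub_mul, hPL, Matrix.one_mul, sub_zero]
  · rw [hBL, Matrix.sub_mul, Matrix.one_mul, Matrix.mul_sub, mul_inv_add_eq_self hPP hPL hK, hPP,
      sub_self, sub_zero]
  · rw [hLB, Matrix.transpose_sub, Matrix.transpose_one, hP]
  · rw [hBL, Matrix.transpose_sub, Matrix.transpose_one, hP]

end MoorePenrose

section Laplacian

variable {W : Type*} [Fintype W]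

noncomputable def averagingMatrix (W : Type*) [Fintype W] : Matrix W W ℝ :=
  Matrix.of fun _ _ => (Fintype.card W : ℝ)⁻¹

theorem averagingMatrix_mulVec (z : W → ℝ) :
    averagingMatrix W *ᵥ z = fun _ => (Fintype.card W : ℝ)⁻¹ * ∑ i, z i := by
  ext; simp [averagingMatrix, Matrix.mulVec, dotProduct, Finset.mul_sum]

theorem averagingMatrix_transpose : (averagingMatrix W)ᵀ = averagingMatrix W := rfl

theorem averagingMatrix_mul_self [Nonempty W] :
    averagingMatrix W * averagingMatrix W = averagingMatrix W := by
  ext; simp [averagingMatrix, Matrix.mul_apply]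

variable [DecidableEq W] (H : SimpleGraph W) [DecidableRel H.Adj]

theorem lapMatrix_mul_averagingMatrix : H.lapMatrix ℝ * averagingMatrix W = 0 := by
  ext i j
  have := congrFun (H.lapMatrix_mulVec_const_eq_zero (R := ℝ)) i
  simp_all [averagingMatrix, Matrix.mul_apply, Matrix.mulVec, dotProduct, ← Finset.sum_mul]

theorem averagingMatrix_mul_lapMatrix : averagingMatrix W * H.lapMatrix ℝ = 0 := by
  rw [← averagingMatrix_transpose, ← (H.isSymm_lapMatrix (R := ℝ)).eq,
    ← Matrix.transpose_mul, lapMatrix_mul_averagingMatrix, Matrix.transpose_zero]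

theorem eq_zero_of_lapMatrix_mulVec_eq_zero (hconn : H.Connected) {z : W → ℝ}
    (hL : H.lapMatrix ℝ *ᵥ z = 0) (hP : averagingMatrix W *ᵥ z = 0) : z = 0 := by
  have hconst : ∀ i j, z i = z j := fun i j =>
    H.lapMatrix_mulVec_eq_zero_iff_forall_reachable.mp hL i j (hconn.preconnected i j)
  ext i
  have hcard : (Fintype.card W : ℝ) ≠ 0 := by
    have := hconn.nonempty; positivity
  have := congrFun hP i
  simp_rw [averagingMatrix_mulVec, hconst _ i] at this
  simpa [hcard] using this

theorem exists_isMoorePenrose_lapMatrix (hconn : H.Connected) :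
    ∃ B, IsMoorePenrose (H.lapMatrix ℝ) B ∧ Bᵀ = B ∧
      ∀ r : W → ℝ, ∑ i, r i = 0 → H.lapMatrix ℝ *ᵥ (B *ᵥ r) = r := by
  have := hconn.nonempty
  set L := H.lapMatrix ℝ
  set P := averagingMatrix W
  have hLP := lapMatrix_mul_averagingMatrix H
  have hPL := averagingMatrix_mul_lapMatrix H
  have hPP : P * P = P := averagingMatrix_mul_self
  have hK : IsUnit (L + P) := isUnit_add_of_idempotent hPP hPL
    fun _ hL hP => eq_zero_of_lapMatrix_mulVec_eq_zero H hconn hL hP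
  refine ⟨(L + P)⁻¹ - P, isMoorePenrose_inv_add_sub hPP averagingMatrix_transpose hLP hPL hK,
    ?_, fun r hr => ?_⟩
  · rw [Matrix.transpose_sub, Matrix.transpose_nonsing_inv, Matrix.transpose_add,
      (H.isSymm_lapMatrix (R := ℝ)).eq, averagingMatrix_transpose]
  · rw [Matrix.mulVec_mulVec, mul_inv_add_sub hPP hLP hPL hK, Matrix.sub_mulVec,
      Matrix.one_mulVec, averagingMatrix_mulVec, hr, mul_zero]
    exact sub_zero r

end Laplacian

section Resistance

variable {W : Type*} [Fintype W] [DecidableEq W] (H : SimpleGraph W) [DecidableRel H.Adj]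

theorem resistanceDistance_self (x : W) : resistanceDistance H x x = 0 := by
  unfold resistanceDistance
  split <;> ring

theorem resistanceDistance_eq_of_isMoorePenrose {B : Matrix W W ℝ}
    (hB : IsMoorePenrose (H.lapMatrix ℝ) B) (x y : W) :
    resistanceDistance H x y = B x x + B y y - 2 * B x y := by
  -- `resistanceDistance` is stated with classical decidability instances; `convert` bridges them.
  have h : ∃ C, IsMoorePenrose (H.lapMatrix ℝ) C := ⟨B, hB⟩
  unfold resistanceDistance
  rw [dif_pos (by convert h)]
  generalize_proofs hex
  rw [show hex.choose = B from IsMoorePenrose.unique (by convert hex.choose_spec) hB]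

theorem single_sub_single_dotProduct_mulVec (B : Matrix W W ℝ) (x y : W) :
    (Pi.single x 1 - Pi.single y 1) ⬝ᵥ (B *ᵥ (Pi.single x 1 - Pi.single y 1))
      = B x x + B y y - B x y - B y x := by
  simp only [sub_dotProduct, single_dotProduct, one_mul, Matrix.mulVec_sub, Pi.sub_apply,
    Matrix.mulVec_single_one, Matrix.col_apply]
  ring

theorem resistanceDistance_eq_sub_of_lapMatrix_mulVec (hconn : H.Connected) {x y : W}
    {z : W → ℝ} (hz : H.lapMatrix ℝ *ᵥ z = Pi.single x 1 - Pi.single y 1) :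
    resistanceDistance H x y = z x - z y := by
  obtain ⟨B, hMP, hBt, hsolve⟩ := exists_isMoorePenrose_lapMatrix H hconn
  set r : W → ℝ := Pi.single x 1 - Pi.single y 1
  have hr : ∑ i, r i = 0 := by simp [r, Finset.sum_sub_distrib]
  calc resistanceDistance H x y = r ⬝ᵥ (B *ᵥ r) := by
        rw [resistanceDistance_eq_of_isMoorePenrose H hMP, single_sub_single_dotProduct_mulVec,
          ← Matrix.transpose_apply B y x, hBt]
        ring
    _ = (H.lapMatrix ℝ *ᵥ z) ⬝ᵥ (B *ᵥ r) := by rw [hz]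
    _ = z ⬝ᵥ (H.lapMatrix ℝ *ᵥ (B *ᵥ r)) := by
        rw [dotProduct_comm, Matrix.dotProduct_mulVec, ← Matrix.mulVec_transpose,
          (H.isSymm_lapMatrix (R := ℝ)).eq, dotProduct_comm]
    _ = z x - z y := by
        rw [hsolve r hr]
        simp [r, dotProduct_sub]

theorem exists_lapMatrix_mulVec_eq (hconn : H.Connected) {r : W → ℝ} (hr : ∑ i, r i = 0) :
    ∃ z, H.lapMatrix ℝ *ᵥ z = r :=
  let ⟨B, _, _, hsolve⟩ := exists_isMoorePenrose_lapMatrix H hconn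
  ⟨B *ᵥ r, hsolve r hr⟩

end Resistance

section Incidence

theorem sum_edgeSet_eq_sum_sym2 [Fintype V] (G : SimpleGraph V) [DecidableRel G.Adj]
    {M : Type*} [AddCommMonoid M] {f : Sym2 V → M} (hf : ∀ e ∉ G.edgeSet, f e = 0) :
    ∑ e : G.edgeSet, f e = ∑ e, f e := by
  rw [Finset.sum_set_coe]
  exact Finset.sum_subset (Finset.subset_univ _) fun e _ he => hf e (by simpa using he)

variable (R : Type*) [CommRing R] [DecidableEq V] (G : SimpleGraph V) [DecidableRel G.Adj]

def edgeIncMatrix : Matrix V G.edgeSet R := (G.incMatrix R).submatrix id Subtype.val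

variable {R}

theorem edgeIncMatrix_apply (v : V) (e : G.edgeSet) :
    edgeIncMatrix R G v e = if v ∈ (e : Sym2 V) then 1 else 0 := by
  simp [edgeIncMatrix, SimpleGraph.incMatrix_apply', SimpleGraph.incidenceSet, e.2]

variable [Fintype V]

theorem edgeIncMatrix_mul_transpose :
    edgeIncMatrix R G * (edgeIncMatrix R G)ᵀ = G.degMatrix R + G.adjMatrix R := by
  ext a b
  calc (edgeIncMatrix R G * (edgeIncMatrix R G)ᵀ) a b
      = ∑ e : G.edgeSet, G.incMatrix R a e * G.incMatrix R b e := rfl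
    _ = (G.incMatrix R * (G.incMatrix R)ᵀ) a b :=
        sum_edgeSet_eq_sum_sym2 G (f := fun e => G.incMatrix R a e * G.incMatrix R b e)
          fun e he => by rw [G.incMatrix_of_notMem_incidenceSet fun h => he h.1, zero_mul]
    _ = (G.degMatrix R + G.adjMatrix R) a b := by
        rw [G.incMatrix_mul_transpose]
        rcases eq_or_ne a b with rfl | hab
        · simp [SimpleGraph.degMatrix]
        · simp [SimpleGraph.degMatrix, hab, SimpleGraph.adjMatrix_apply]

theorem edgeIncMatrix_mulVec_one : edgeIncMatrix R G *ᵥ 1 = fun v => (G.degree v : R) := by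
  ext v
  calc (edgeIncMatrix R G *ᵥ 1) v = ∑ e : G.edgeSet, G.incMatrix R v e := by
        simp [edgeIncMatrix, Matrix.mulVec, dotProduct]
    _ = ∑ e, G.incMatrix R v e := sum_edgeSet_eq_sum_sym2 G (f := G.incMatrix R v) fun e he =>
        G.incMatrix_of_notMem_incidenceSet fun h => he h.1
    _ = G.degree v := G.sum_incMatrix_apply

theorem edgeIncMatrix_transpose_mulVec_one : (edgeIncMatrix R G)ᵀ *ᵥ 1 = 2 := by
  ext e
  simpa [edgeIncMatrix, Matrix.mulVec, dotProduct] using G.sum_incMatrix_apply_of_mem_edgeSet e.2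

theorem adjMatrix_subdivision :
    (subdivision G).adjMatrix R =
      Matrix.fromBlocks 0 (edgeIncMatrix R G) (edgeIncMatrix R G)ᵀ 0 := by
  ext (u | e) (v | f) <;>
    simp only [SimpleGraph.adjMatrix_apply, edgeIncMatrix_apply, Matrix.fromBlocks_apply₁₁,
      Matrix.fromBlocks_apply₁₂, Matrix.fromBlocks_apply₂₁, Matrix.fromBlocks_apply₂₂,
      Matrix.transpose_apply, Matrix.zero_apply] <;> rfl

theorem adjMatrix_triangulation :
    (triangulation G).adjMatrix R =
      Matrix.fromBlocks (G.adjMatrix R) (edgeIncMatrix R G) (edgeIncMatrix R G)ᵀ 0 := by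
  ext (u | e) (v | f) <;>
    simp only [SimpleGraph.adjMatrix_apply, edgeIncMatrix_apply, Matrix.fromBlocks_apply₁₁,
      Matrix.fromBlocks_apply₁₂, Matrix.fromBlocks_apply₂₁, Matrix.fromBlocks_apply₂₂,
      Matrix.transpose_apply, Matrix.zero_apply] <;> rfl

end Incidence

section BlockLaplacian

variable {R : Type*} [CommRing R]

section

variable {W : Type*} [Fintype W] (H : SimpleGraph W) [DecidableRel H.Adj]

theorem adjMatrix_mulVec_one : H.adjMatrix R *ᵥ 1 = fun v => (H.degree v : R) := by
  ext v
  simp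

theorem lapMatrix_eq_diagonal_sub [DecidableEq W] :
    H.lapMatrix R = Matrix.diagonal (H.adjMatrix R *ᵥ 1) - H.adjMatrix R := by
  rw [adjMatrix_mulVec_one]
  rfl

end

variable [Fintype V] [DecidableEq V] (G : SimpleGraph V) [DecidableRel G.Adj]

theorem lapMatrix_subdivision : (subdivision G).lapMatrix R =
    Matrix.fromBlocks (G.degMatrix R) (-edgeIncMatrix R G) (-(edgeIncMatrix R G)ᵀ)
      ((2 : R) • 1) := by
  rw [lapMatrix_eq_diagonal_sub, adjMatrix_subdivision, Matrix.fromBlocks_mulVec,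
    ← Matrix.fromBlocks_diagonal, sub_eq_add_neg, Matrix.fromBlocks_neg, Matrix.fromBlocks_add]
  congr 1
  · simp [edgeIncMatrix_mulVec_one, SimpleGraph.degMatrix]
  · exact zero_add _
  · exact zero_add _
  · simp [edgeIncMatrix_transpose_mulVec_one, Matrix.smul_one_eq_diagonal]

theorem lapMatrix_triangulation : (triangulation G).lapMatrix R =
    Matrix.fromBlocks (2 • G.degMatrix R - G.adjMatrix R) (-edgeIncMatrix R G)
      (-(edgeIncMatrix R G)ᵀ) ((2 : R) • 1) := by
  rw [lapMatrix_eq_diagonal_sub, adjMatrix_triangulation, Matrix.fromBlocks_mulVec,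
    ← Matrix.fromBlocks_diagonal, sub_eq_add_neg, Matrix.fromBlocks_neg, Matrix.fromBlocks_add]
  congr 1
  · rw [Pi.one_comp, Pi.one_comp, adjMatrix_mulVec_one, edgeIncMatrix_mulVec_one, two_smul,
      SimpleGraph.degMatrix, Matrix.diagonal_add, sub_eq_add_neg]
    rfl
  · exact zero_add _
  · exact zero_add _
  · simp [edgeIncMatrix_transpose_mulVec_one, Matrix.smul_one_eq_diagonal]

theorem lapMatrix_triangulation_mul :
    (triangulation G).lapMatrix R *
        (1 + Matrix.diagonal (Sum.elim 0 1) * (subdivision G).lapMatrix R) =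
      (3 : R) • (subdivision G).lapMatrix R := by
  rw [lapMatrix_triangulation, lapMatrix_subdivision, ← Matrix.fromBlocks_diagonal,
    show Matrix.diagonal (0 : V → R) = 0 from Matrix.diagonal_zero,
    show Matrix.diagonal (1 : G.edgeSet → R) = 1 from Matrix.diagonal_one,
    Matrix.fromBlocks_multiply, ← Matrix.fromBlocks_one,
    Matrix.fromBlocks_add, Matrix.fromBlocks_multiply, Matrix.fromBlocks_smul]
  simp only [Matrix.zero_mul, Matrix.mul_zero, Matrix.one_mul, Matrix.mul_one, neg_zero, zero_add,
    add_zero, Matrix.mul_neg, Matrix.neg_mul, Matrix.mul_add, neg_neg, Matrix.smul_mul,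
    Matrix.mul_smul, edgeIncMatrix_mul_transpose]
  congr 1 <;> module

end BlockLaplacian

section Connectivity

variable [DecidableEq V] {G : SimpleGraph V}

theorem subdivision_connected (hconn : G.Connected) : (subdivision G).Connected := by
  have hadj : ∀ u v, G.Adj u v → (subdivision G).Reachable (.inl u) (.inl v) := fun u v h =>
    have hu : (subdivision G).Adj (.inl u) (.inr ⟨s(u, v), h⟩) := Sym2.mem_mk_left u v
    have hv : (subdivision G).Adj (.inr ⟨s(u, v), h⟩) (.inl v) := Sym2.mem_mk_right u v
    hu.reachable.trans hv.reachable
  have hinl : ∀ u v, (subdivision G).Reachable (.inl u) (.inl v) := fun u v =>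
    ((subdivision G).reachable_iff_reflTransGen _ _).mpr <|
      ((G.reachable_iff_reflTransGen u v).mp (hconn.preconnected u v)).lift' Sum.inl
        fun a b h => ((subdivision G).reachable_iff_reflTransGen _ _).mp (hadj a b h)
  have hroot : ∀ x, ∃ u, (subdivision G).Reachable x (.inl u)
    | .inl u => ⟨u, .rfl⟩
    | .inr e => ⟨(e : Sym2 V).out.1,
        (show (subdivision G).Adj (.inr e) (.inl _) from Sym2.out_fst_mem _).reachable⟩
  have := hconn.nonempty
  refine ⟨fun x y => ?_⟩
  obtain ⟨u, hu⟩ := hroot x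
  obtain ⟨v, hv⟩ := hroot y
  exact hu.trans ((hinl u v).trans hv.symm)

theorem subdivision_le_triangulation : subdivision G ≤ triangulation G := by
  rintro (u | e) (v | f) h <;> first | exact h | exact h.elim

theorem triangulation_connected (hconn : G.Connected) : (triangulation G).Connected :=
  (subdivision_connected hconn).mono subdivision_le_triangulation

end Connectivity

theorem sum_sum_ite_eq_zero_add {ι R : Type*} [Fintype ι] [DecidableEq ι] [CommRing R]
    (f : ι → R) :
    ∑ i, ∑ j, (if i = j then 0 else f i + f j) =
      2 * ((Fintype.card ι : R) - 1) * ∑ i, f i := by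
  have h : ∀ i j, (if i = j then 0 else f i + f j) = f i + f j - if i = j then f i + f j else 0 :=
    fun i j => by split_ifs <;> ring
  simp only [h, Finset.sum_sub_distrib, Finset.sum_add_distrib, Finset.sum_ite_eq,
    Finset.mem_univ, if_true, Finset.sum_const, Finset.card_univ, nsmul_eq_mul, ← Finset.mul_sum]
  ring

section Kirchhoff

variable [Fintype V] [DecidableEq V] {G : SimpleGraph V} [DecidableRel G.Adj]

theorem resistanceDistance_triangulation (hconn : G.Connected) (x y : V ⊕ G.edgeSet) :
    resistanceDistance (triangulation G) x y =
      (resistanceDistance (subdivision G) x y +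
        if x = y then 0 else Sum.elim (0 : V → ℝ) 1 x + Sum.elim (0 : V → ℝ) 1 y) / 3 := by
  rcases eq_or_ne x y with rfl | hxy
  · simp [resistanceDistance_self]
  set r : V ⊕ G.edgeSet → ℝ := Pi.single x 1 - Pi.single y 1
  obtain ⟨w, hw⟩ := exists_lapMatrix_mulVec_eq _ (subdivision_connected hconn) (r := r)
    (by simp [r, Finset.sum_sub_distrib])
  set Q : Matrix (V ⊕ G.edgeSet) (V ⊕ G.edgeSet) ℝ := Matrix.diagonal (Sum.elim 0 1)
  have hz : (triangulation G).lapMatrix ℝ *ᵥ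
      ((3 : ℝ)⁻¹ • ((1 + Q * (subdivision G).lapMatrix ℝ) *ᵥ w)) = r := by
    rw [Matrix.mulVec_smul, Matrix.mulVec_mulVec, lapMatrix_triangulation_mul, Matrix.smul_mulVec,
      smul_smul, inv_mul_cancel₀ three_ne_zero, one_smul, hw]
  rw [if_neg hxy, resistanceDistance_eq_sub_of_lapMatrix_mulVec _ (subdivision_connected hconn) hw,
    resistanceDistance_eq_sub_of_lapMatrix_mulVec _ (triangulation_connected hconn) hz]
  simp only [Matrix.add_mulVec, Matrix.one_mulVec, ← Matrix.mulVec_mulVec, hw, Pi.smul_apply,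
    Pi.add_apply, Matrix.mulVec_diagonal, smul_eq_mul, Q, r, Pi.sub_apply, Pi.single_eq_same,
    Pi.single_eq_of_ne hxy, Pi.single_eq_of_ne hxy.symm]
  ring

theorem kirchhoffIndex_triangulation (hconn : G.Connected) :
    kirchhoffIndex (triangulation G) = (1 / 3) * kirchhoffIndex (subdivision G) +
      (G.edgeFinset.card : ℝ) * (G.edgeFinset.card + Fintype.card V - 1) / 3 := by
  have hcard : (Fintype.card (V ⊕ G.edgeSet) : ℝ) = Fintype.card V + G.edgeFinset.card := by
    simp [G.edgeFinset_card]
  have hsum : ∑ x : V ⊕ G.edgeSet, Sum.elim (0 : V → ℝ) 1 x = G.edgeFinset.card := by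
    simp [Fintype.sum_sum_type, G.edgeFinset_card]
  simp only [kirchhoffIndex, resistanceDistance_triangulation hconn, add_div,
    Finset.sum_add_distrib, ← Finset.sum_div, sum_sum_ite_eq_zero_add, hcard, hsum]
  ring

end Kirchhoff

theorem statement_15_general {V : Type*} [Fintype V] [DecidableEq V]
    (G : SimpleGraph V) [DecidableRel G.Adj] (n m : ℕ)
    (hn : Fintype.card V = n) (hm : G.edgeFinset.card = m)
    (hconn : G.Connected) :
    kirchhoffIndex (triangulation G) =
      (1 / 3) * kirchhoffIndex (subdivision G) + (m : ℝ) * ((m : ℝ) + n - 1) / 3 := by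
  rw [kirchhoffIndex_triangulation hconn, hm, hn]

theorem statement_15 {V : Type*} [Fintype V] [DecidableEq V]
    (G : SimpleGraph V) [DecidableRel G.Adj] (n m : ℕ)
    (hn : Fintype.card V = n) (hm : G.edgeFinset.card = m)
    (hconn : G.Connected) (hn2 : 2 ≤ n) :
    kirchhoffIndex (triangulation G) =
      (1 / 3) * kirchhoffIndex (subdivision G) + (m : ℝ) * ((m : ℝ) + n - 1) / 3 :=
  statement_15_general G n m hn hm hconn

end KirchhoffPaper
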